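/- Let X be a nonempty topological space, n a positive natural number, and suppose X^n (with the product topology) has a κ^op-like base consisting of open boxes (finite products of open sets). Then X itself has a κ^op-like base. Consequently, the least infinite κ such that X^n has a κ^op-like box base equals the Noetherian type of X. -/

import Mathlib

open Cardinal Set

universe u

variable {X : Type u}

/-- `B` is a base for the topology of `X`. -/
def IsBase [TopologicalSpace X] (B : Set (Set X)) : Prop :=
  (∀ U ∈ B, IsOpen U) ∧ ∀ W : Set X, IsOpen W → ∀ p ∈ W, ∃ U ∈ B, p ∈ U ∧ U ⊆ W

/-- `B` is a local base at `p`. -/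
def IsLocalBase [TopologicalSpace X] (p : X) (B : Set (Set X)) : Prop :=
  (∀ U ∈ B, IsOpen U ∧ p ∈ U) ∧ ∀ W : Set X, IsOpen W → p ∈ W → ∃ U ∈ B, U ⊆ W

/-- `B` is a local π-base at `p`. -/
def IsLocalPiBase [TopologicalSpace X] (p : X) (B : Set (Set X)) : Prop :=
  (∀ U ∈ B, IsOpen U ∧ U.Nonempty) ∧ ∀ W : Set X, IsOpen W → p ∈ W → ∃ U ∈ B, U ⊆ W

/-- The weight of `X`: the least infinite cardinal `κ` such that `X` has a base of
cardinality at most `κ`. -/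
noncomputable def weight (X : Type u) [TopologicalSpace X] : Cardinal.{u} :=
  sInf {κ | ℵ₀ ≤ κ ∧ ∃ B : Set (Set X), IsBase B ∧ #B ≤ κ}

/-- The character of `p` in `X`. -/
noncomputable def character [TopologicalSpace X] (p : X) : Cardinal.{u} :=
  sInf {κ | ℵ₀ ≤ κ ∧ ∃ B : Set (Set X), IsLocalBase p B ∧ #B ≤ κ}

/-- The π-character of `p` in `X`. -/
noncomputable def piCharacter [TopologicalSpace X] (p : X) : Cardinal.{u} :=
  sInf {κ | ℵ₀ ≤ κ ∧ ∃ B : Set (Set X), IsLocalPiBase p B ∧ #B ≤ κ}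

/-- A family of sets (ordered by `⊆`) is `κ^op`-like if no member is contained in
`κ`-many members. -/
def IsOpLike {Y : Type u} (B : Set (Set Y)) (κ : Cardinal.{u}) : Prop :=
  ∀ U ∈ B, #{V : Set Y // V ∈ B ∧ U ⊆ V} < κ

/-- The Noetherian type of `X`: the least infinite `κ` such that `X` has a
`κ^op`-like base. -/
noncomputable def Nt (X : Type u) [TopologicalSpace X] : Cardinal.{u} :=
  sInf {κ | ℵ₀ ≤ κ ∧ ∃ B : Set (Set X), IsBase B ∧ IsOpLike B κ}

/-- `⟨F i⟩` is a `⟨#ι, κ⟩`-splitter of `X`: a sequence of finite open covers such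
that for every index set `I` of cardinality `κ` and every choice `U i ∈ F i`
(`i ∈ I`), the interior of `⋂_{i ∈ I} U i` is empty. -/
def IsSplitter [TopologicalSpace X] {ι : Type u} (F : ι → Set (Set X))
    (κ : Cardinal.{u}) : Prop :=
  (∀ i, (F i).Finite ∧ (∀ U ∈ F i, IsOpen U) ∧ ⋃₀ F i = Set.univ) ∧
  ∀ (I : Set ι) (U : ι → Set X), #I = κ → (∀ i ∈ I, U i ∈ F i) →
    interior (⋂ i ∈ I, U i) = ∅

/-- `W ⊆ X^n` is an open box: a product of open subsets of `X`. -/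
def IsBox [TopologicalSpace X] {n : ℕ} (W : Set (Fin n → X)) : Prop :=
  ∃ U : Fin n → Set X, (∀ i, IsOpen (U i)) ∧ W = Set.univ.pi U

/-- The least infinite `κ` such that `X^n` has a `κ^op`-like base of open boxes. -/
noncomputable def NtBox (n : ℕ) (X : Type u) [TopologicalSpace X] : Cardinal.{u} :=
  sInf {κ | ℵ₀ ≤ κ ∧ ∃ B : Set (Set (Fin n → X)),
    IsBase B ∧ (∀ W ∈ B, IsBox W) ∧ IsOpLike B κ}

/- If `B` is a box base of `X^n`, the nonempty traces of its members on the diagonal form a base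
of `X`. For such a trace `S`, fix a member `W₀` of `B` with `W₀ ⊆ S^n`: a trace `⋂ U' i ⊇ S` of a
box `∏ U' i ∈ B` gives `W₀ ⊆ S^n ⊆ ∏ U' i`, so the traces above `S` are at most as many as the
members of `B` above `W₀`. Conversely, the boxes of nonempty members of a `κ^op`-like base of `X`
form a box base of `X^n`, and a box above `∏ U i` is determined by `n` members lying above the
`U i`; a finite product of cardinals below an infinite `κ` stays below `κ`. -/

open TopologicalSpace Topology

lemma isBase_iff_isTopologicalBasis {Y : Type*} [TopologicalSpace Y] {B : Set (Set Y)} :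
    IsBase B ↔ IsTopologicalBasis B :=
  ⟨fun hB => isTopologicalBasis_of_isOpen_of_nhds hB.1 fun p W hp hW => hB.2 W hW p hp,
    fun hB => ⟨fun _ hU => hB.isOpen hU, fun _ hW _ hp => hB.exists_subset_of_mem_open hp hW⟩⟩

lemma Cardinal.mk_pi_fin_lt {n : ℕ} {κ : Cardinal.{u}} (hκ : ℵ₀ ≤ κ) (α : Fin n → Type u)
    (h : ∀ i, #(α i) < κ) : #(∀ i, α i) < κ := by
  induction n with
  | zero => simpa using one_lt_aleph0.trans_le hκ
  | succ n ih =>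
    rw [mk_congr (Fin.insertNthEquiv α 0).symm, mk_prod, lift_id, lift_id]
    exact mul_lt_of_lt hκ (h 0) (ih _ fun i => h _)

section OpLike

variable {Y : Type u} {B C : Set (Set Y)} {κ : Cardinal.{u}}

lemma IsOpLike.mono (hB : IsOpLike B κ) (hCB : C ⊆ B) : IsOpLike C κ := fun U hU =>
  (mk_le_mk_of_subset (s := {V | V ∈ C ∧ U ⊆ V}) (t := {V | V ∈ B ∧ U ⊆ V})
    fun _ hV => ⟨hCB hV.1, hV.2⟩).trans_lt (hB U (hCB hU))

lemma isOpLike_of_subset_range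
    (h : ∀ U ∈ C, ∃ (α : Type u) (g : α → Set Y), #α < κ ∧ {V | V ∈ C ∧ U ⊆ V} ⊆ range g) :
    IsOpLike C κ := fun U hU => by
  obtain ⟨α, g, hα, hsub⟩ := h U hU
  exact ((mk_le_mk_of_subset hsub).trans mk_range_le).trans_lt hα

end OpLike

lemma isTopologicalBasis_univ_pi {ι : Type*} [Finite ι] {Y : ι → Type*}
    [∀ i, TopologicalSpace (Y i)] {T : ∀ i, Set (Set (Y i))} (hT : ∀ i, IsTopologicalBasis (T i)) :
    IsTopologicalBasis {S | ∃ U : ∀ i, Set (Y i), (∀ i, U i ∈ T i) ∧ S = univ.pi U} := by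
  refine isTopologicalBasis_of_isOpen_of_nhds ?_ fun f W hf hW => ?_
  · rintro _ ⟨U, hU, rfl⟩
    exact isOpen_set_pi finite_univ fun i _ => (hT i).isOpen (hU i)
  · obtain ⟨u, hu, huW⟩ := isOpen_pi_iff'.mp hW f hf
    choose V hVT hfV hVu using fun i => (hT i).exists_subset_of_mem_open (hu i).2 (hu i).1
    exact ⟨univ.pi V, ⟨V, hVT, rfl⟩, fun i _ => hfV i, (pi_mono fun i _ => hVu i).trans huW⟩

lemma isInducing_diag {n : ℕ} (hn : 0 < n) [TopologicalSpace X] :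
    IsInducing fun (x : X) (_ : Fin n) => x :=
  .of_comp (continuous_pi fun _ => continuous_id) (continuous_apply ⟨0, hn⟩) .id

lemma exists_isOpLike_base_of_box_base [TopologicalSpace X] {n : ℕ} (hn : 0 < n)
    {κ : Cardinal.{u}} {B : Set (Set (Fin n → X))}
    (hB : IsBase B) (hbox : ∀ W ∈ B, IsBox W) (hop : IsOpLike B κ) :
    ∃ C : Set (Set X), IsBase C ∧ IsOpLike C κ := by
  set d : X → Fin n → X := fun x _ => x
  rw [isBase_iff_isTopologicalBasis] at hB
  refine ⟨preimage d '' B \ {∅}, isBase_iff_isTopologicalBasis.mpr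
    ((hB.isInducing (isInducing_diag hn)).sdiff_empty), isOpLike_of_subset_range ?_⟩
  rintro S ⟨⟨W, hWB, rfl⟩, hS⟩
  obtain ⟨x, hx⟩ := nonempty_iff_ne_empty.mpr hS
  have hSn : IsOpen (univ.pi fun _ : Fin n => d ⁻¹' W) := isOpen_set_pi finite_univ fun _ _ =>
    (hB.isOpen hWB).preimage (isInducing_diag hn).continuous
  obtain ⟨W₀, hW₀B, -, hW₀⟩ :=
    hB.exists_subset_of_mem_open (show d x ∈ univ.pi fun _ => d ⁻¹' W from fun _ _ => hx) hSn
  refine ⟨{W' // W' ∈ B ∧ W₀ ⊆ W'}, fun W' => d ⁻¹' W'.1, hop W₀ hW₀B, ?_⟩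
  rintro _ ⟨⟨⟨W', hW'B, rfl⟩, -⟩, hWW'⟩
  obtain ⟨U', -, rfl⟩ := hbox W' hW'B
  exact ⟨⟨_, hW'B, hW₀.trans fun f hf i _ => hWW' (hf i trivial) i trivial⟩, rfl⟩

lemma exists_isOpLike_box_base_of_base [TopologicalSpace X] {n : ℕ} {κ : Cardinal.{u}}
    (hκ : ℵ₀ ≤ κ) {C : Set (Set X)} (hC : IsBase C) (hop : IsOpLike C κ) :
    ∃ B : Set (Set (Fin n → X)), IsBase B ∧ (∀ W ∈ B, IsBox W) ∧ IsOpLike B κ := by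
  set C' := C \ {∅}
  have hC' : IsTopologicalBasis C' := (isBase_iff_isTopologicalBasis.mp hC).sdiff_empty
  refine ⟨{W | ∃ U : Fin n → Set X, (∀ i, U i ∈ C') ∧ W = univ.pi U},
    isBase_iff_isTopologicalBasis.mpr (isTopologicalBasis_univ_pi fun _ => hC'), ?_, ?_⟩
  · rintro _ ⟨U, hU, rfl⟩
    exact ⟨U, fun i => hC'.isOpen (hU i), rfl⟩
  · refine isOpLike_of_subset_range ?_
    rintro _ ⟨U, hU, rfl⟩
    refine ⟨∀ i, {V // V ∈ C' ∧ U i ⊆ V}, fun V => univ.pi fun i => (V i).1,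
      Cardinal.mk_pi_fin_lt hκ _ fun i => (hop.mono sdiff_subset) _ (hU i), ?_⟩
    rintro _ ⟨⟨U', hU', rfl⟩, hUU'⟩
    have hle : ∀ i, U i ⊆ U' i := (univ_pi_subset_univ_pi_iff.mp hUU').resolve_right
      fun ⟨i, hi⟩ => (hU i).2 hi
    exact ⟨fun i => ⟨U' i, hU' i, hle i⟩, rfl⟩

theorem ntBox_pow_eq_nt_general
    [TopologicalSpace X] (n : ℕ) (hn : 0 < n) :
    (∀ κ : Cardinal.{u},
      (∃ B : Set (Set (Fin n → X)), IsBase B ∧ (∀ W ∈ B, IsBox W) ∧ IsOpLike B κ) →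
      ∃ C : Set (Set X), IsBase C ∧ IsOpLike C κ) ∧
    NtBox n X = Nt X := by
  have box_to_base : ∀ κ : Cardinal.{u},
      (∃ B : Set (Set (Fin n → X)), IsBase B ∧ (∀ W ∈ B, IsBox W) ∧ IsOpLike B κ) →
      ∃ C : Set (Set X), IsBase C ∧ IsOpLike C κ := fun _ ⟨_, hB, hbox, hop⟩ =>
    exists_isOpLike_base_of_box_base hn hB hbox hop
  refine ⟨box_to_base, congrArg sInf (Set.ext fun κ => and_congr_right fun hκ => ?_)⟩
  exact ⟨box_to_base κ, fun ⟨_, hC, hop⟩ => exists_isOpLike_box_base_of_base hκ hC hop⟩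

/-- If `X^n` (`0 < n`) has a `κ^op`-like base of open boxes, then `X` has a
`κ^op`-like base; consequently `Nt_box(X^n) = Nt(X)`. -/
theorem ntBox_pow_eq_nt
    [TopologicalSpace X] [Nonempty X] (n : ℕ) (hn : 0 < n) :
    (∀ κ : Cardinal.{u},
      (∃ B : Set (Set (Fin n → X)), IsBase B ∧ (∀ W ∈ B, IsBox W) ∧ IsOpLike B κ) →
      ∃ C : Set (Set X), IsBase C ∧ IsOpLike C κ) ∧
    NtBox n X = Nt X :=
  ntBox_pow_eq_nt_general n hn
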